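/- Let μ > 0, B ≥ 2 an integer, and 0 < τ_{B−1} ≤ τ_{B−2} ≤ … ≤ τ_1 < ∞. Define the B×B matrix P, with rows and columns indexed by {0,…,B−1}, by P_{j,B−1} = G_{B−j}(τ_{B−1}) and P_{j,i} = G_{1+i−j}(τ_i) − G_{2+i−j}(τ_{i+1}) for 0 ≤ i < B−1. Then for all states j, i ∈ {0,…,B−1} there exists an integer k with 1 ≤ k ≤ B−1 such that the (j,i) entry of the matrix power P^k is strictly positive; in particular the Markov chain with transition matrix P is irreducible. -/

import Mathlib

/-
Every entry of `P` is nonnegative, and `P j i > 0` whenever `j ≤ i + 1`: the Erlang CDF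
`G_m(t)` is increasing in `t` and strictly decreasing in the number of stages `m` once `t > 0`,
and all thresholds are positive. So from level `j` every level `i ≥ j - 1` is reached in one
step, and a level `i < j - 1` by descending one level per step, in `j - i ≤ B - 1` steps.
-/

/-- The Erlang CDF `G_m` with rate `μ` and (integer) stage parameter `m`:
`G_m(t) = 1 - e^(-μt) ∑_{k=0}^{m-1} (μt)^k / k!` for `t ≥ 0` and `m ≥ 1`,
with the conventions `G_m(t) = 0` for `t < 0` and `G_m(t) = 1` for `t ≥ 0` when `m ≤ 0`. -/
noncomputable def erlangCDF (μ : ℝ) (m : ℤ) (t : ℝ) : ℝ :=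
  if t < 0 then 0
  else if m ≤ 0 then 1
  else 1 - Real.exp (-(μ * t)) *
    ∑ k ∈ Finset.range m.toNat, (μ * t) ^ k / (Nat.factorial k : ℝ)

open Finset
open scoped Nat

noncomputable def erlangSurvival (m : ℕ) (x : ℝ) : ℝ :=
  Real.exp (-x) * ∑ k ∈ range m, x ^ k / k !

lemma hasDerivAt_expPartialSum_succ (n : ℕ) (x : ℝ) :
    HasDerivAt (fun y : ℝ => ∑ k ∈ range (n + 1), y ^ k / k !)
      (∑ k ∈ range n, x ^ k / k !) x := by
  induction n with
  | zero => simpa using hasDerivAt_const x (1 : ℝ)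
  | succ n ih =>
    have hpow : HasDerivAt (fun y : ℝ => y ^ (n + 1) / ((n + 1)! : ℝ)) (x ^ n / n !) x := by
      refine ((hasDerivAt_pow (n + 1) x).div_const _).congr_deriv ?_
      rw [Nat.factorial_succ]; push_cast; field_simp
    simpa only [← sum_range_succ] using ih.fun_add hpow

namespace erlangSurvival

lemma succ (m : ℕ) (x : ℝ) :
    erlangSurvival (m + 1) x = erlangSurvival m x + Real.exp (-x) * (x ^ m / m !) := by
  rw [erlangSurvival, erlangSurvival, sum_range_succ, mul_add]

lemma nonneg (m : ℕ) {x : ℝ} (hx : 0 ≤ x) : 0 ≤ erlangSurvival m x := by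
  unfold erlangSurvival; positivity

lemma pos {m : ℕ} (hm : 0 < m) {x : ℝ} (hx : 0 ≤ x) : 0 < erlangSurvival m x :=
  mul_pos (Real.exp_pos _) <| sum_pos' (fun k _ => by positivity) ⟨0, mem_range.2 hm, by simp⟩

lemma le_one (m : ℕ) {x : ℝ} (hx : 0 ≤ x) : erlangSurvival m x ≤ 1 :=
  calc erlangSurvival m x ≤ Real.exp (-x) * Real.exp x :=
        mul_le_mul_of_nonneg_left (Real.sum_le_exp_of_nonneg hx m) (Real.exp_pos _).le
    _ = 1 := by rw [← Real.exp_add, neg_add_cancel, Real.exp_zero]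

lemma le_succ (m : ℕ) {x : ℝ} (hx : 0 ≤ x) :
    erlangSurvival m x ≤ erlangSurvival (m + 1) x := by
  rw [succ]; linarith [show 0 ≤ Real.exp (-x) * (x ^ m / (m ! : ℝ)) by positivity]

lemma lt_succ (m : ℕ) {x : ℝ} (hx : 0 < x) :
    erlangSurvival m x < erlangSurvival (m + 1) x := by
  rw [succ]; linarith [show 0 < Real.exp (-x) * (x ^ m / (m ! : ℝ)) by positivity]

lemma lt_one (m : ℕ) {x : ℝ} (hx : 0 < x) : erlangSurvival m x < 1 :=
  (lt_succ m hx).trans_le (le_one (m + 1) hx.le)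

lemma hasDerivAt_succ (n : ℕ) (x : ℝ) :
    HasDerivAt (erlangSurvival (n + 1)) (-(Real.exp (-x) * (x ^ n / n !))) x := by
  refine ((hasDerivAt_neg x).exp.mul (hasDerivAt_expPartialSum_succ n x)).congr_deriv ?_
  rw [sum_range_succ]; ring

lemma antitoneOn (m : ℕ) : AntitoneOn (erlangSurvival m) (Set.Ici 0) := by
  cases m with
  | zero => intro x _ y _ _; simp [erlangSurvival]
  | succ n =>
    refine antitoneOn_of_hasDerivWithinAt_nonpos (convex_Ici 0)
      (fun x _ => (hasDerivAt_succ n x).continuousAt.continuousWithinAt)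
      (fun x _ => (hasDerivAt_succ n x).hasDerivWithinAt) fun x hx => ?_
    rw [interior_Ici] at hx
    have : 0 ≤ Real.exp (-x) * (x ^ n / n !) := by have := (Set.mem_Ioi.1 hx).le; positivity
    linarith

lemma monotone_left {x : ℝ} (hx : 0 ≤ x) : Monotone fun m => erlangSurvival m x :=
  monotone_nat_of_le_succ fun m => le_succ m hx

end erlangSurvival

section erlangCDF

variable {μ t s : ℝ} {m : ℤ}

lemma erlangCDF_of_neg (ht : t < 0) : erlangCDF μ m t = 0 := if_pos ht

lemma erlangCDF_eq_one_sub_erlangSurvival (ht : 0 ≤ t) :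
    erlangCDF μ m t = 1 - erlangSurvival m.toNat (μ * t) := by
  rw [erlangCDF, if_neg (not_lt.2 ht)]
  split_ifs with hm
  · simp [erlangSurvival, Int.toNat_of_nonpos hm]
  · rfl

lemma erlangCDF_nonneg (hμ : 0 ≤ μ) (m : ℤ) (t : ℝ) : 0 ≤ erlangCDF μ m t := by
  rcases lt_or_ge t 0 with ht | ht
  · rw [erlangCDF_of_neg ht]
  · rw [erlangCDF_eq_one_sub_erlangSurvival ht, sub_nonneg]
    exact erlangSurvival.le_one _ (mul_nonneg hμ ht)

lemma erlangCDF_le_one (hμ : 0 ≤ μ) (m : ℤ) (t : ℝ) : erlangCDF μ m t ≤ 1 := by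
  rcases lt_or_ge t 0 with ht | ht
  · rw [erlangCDF_of_neg ht]; exact zero_le_one
  · rw [erlangCDF_eq_one_sub_erlangSurvival ht, sub_le_self_iff]
    exact erlangSurvival.nonneg _ (mul_nonneg hμ ht)

lemma erlangCDF_pos (hμ : 0 < μ) (ht : 0 < t) : 0 < erlangCDF μ m t := by
  rw [erlangCDF_eq_one_sub_erlangSurvival ht.le, sub_pos]
  exact erlangSurvival.lt_one _ (mul_pos hμ ht)

lemma erlangCDF_lt_one (hμ : 0 ≤ μ) (hm : 0 < m) (ht : 0 ≤ t) : erlangCDF μ m t < 1 := by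
  rw [erlangCDF_eq_one_sub_erlangSurvival ht, sub_lt_self_iff]
  exact erlangSurvival.pos (by omega) (mul_nonneg hμ ht)

lemma erlangCDF_monotone (hμ : 0 ≤ μ) (m : ℤ) : Monotone (erlangCDF μ m) := by
  intro t s hts
  rcases lt_or_ge t 0 with ht | ht
  · rw [erlangCDF_of_neg ht]; exact erlangCDF_nonneg hμ m s
  · rw [erlangCDF_eq_one_sub_erlangSurvival ht, erlangCDF_eq_one_sub_erlangSurvival (ht.trans hts)]
    exact sub_le_sub_left (erlangSurvival.antitoneOn m.toNat (mul_nonneg hμ ht)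
      (mul_nonneg hμ (ht.trans hts)) (mul_le_mul_of_nonneg_left hts hμ)) 1

lemma erlangCDF_succ_le (hμ : 0 ≤ μ) (m : ℤ) (t : ℝ) :
    erlangCDF μ (m + 1) t ≤ erlangCDF μ m t := by
  rcases lt_or_ge t 0 with ht | ht
  · rw [erlangCDF_of_neg ht, erlangCDF_of_neg ht]
  · rw [erlangCDF_eq_one_sub_erlangSurvival ht, erlangCDF_eq_one_sub_erlangSurvival ht]
    exact sub_le_sub_left (erlangSurvival.monotone_left (mul_nonneg hμ ht) (by omega)) 1

lemma erlangCDF_succ_lt (hμ : 0 < μ) (hm : 0 ≤ m) (ht : 0 < t) :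
    erlangCDF μ (m + 1) t < erlangCDF μ m t := by
  rw [erlangCDF_eq_one_sub_erlangSurvival ht.le, erlangCDF_eq_one_sub_erlangSurvival ht.le,
    show (m + 1).toNat = m.toNat + 1 by omega]
  exact sub_lt_sub_left (erlangSurvival.lt_succ _ (mul_pos hμ ht)) 1

lemma erlangCDF_sub_erlangCDF_succ_nonneg (hμ : 0 ≤ μ) (m : ℤ) (hst : s ≤ t) :
    0 ≤ erlangCDF μ m t - erlangCDF μ (m + 1) s :=
  sub_nonneg.2 <| (erlangCDF_succ_le hμ m s).trans (erlangCDF_monotone hμ m hst)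

lemma erlangCDF_sub_erlangCDF_succ_pos (hμ : 0 < μ) (hm : 0 ≤ m) (hs : 0 < s) (hst : s ≤ t) :
    0 < erlangCDF μ m t - erlangCDF μ (m + 1) s :=
  sub_pos.2 <| (erlangCDF_succ_lt hμ hm hs).trans_le (erlangCDF_monotone hμ.le m hst)

end erlangCDF

namespace Matrix

variable {n : ℕ} {R : Type*} [Semiring R] [LinearOrder R] [IsStrictOrderedRing R]
  {A : Matrix (Fin n) (Fin n) R}

lemma pow_succ_apply_pos (hA : ∀ i j, 0 ≤ A i j) {k : ℕ} {i l j : Fin n}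
    (hil : 0 < A i l) (hlj : 0 < (A ^ k) l j) : 0 < (A ^ (k + 1)) i j := by
  rw [pow_succ', mul_apply]
  exact sum_pos' (fun x _ => mul_nonneg (hA i x) (pow_apply_nonneg hA k x j))
    ⟨l, mem_univ l, mul_pos hil hlj⟩

lemma pow_apply_pos_of_subdiagonal_pos (hA : ∀ i j, 0 ≤ A i j)
    (hsub : ∀ i j : Fin n, (i : ℕ) = j + 1 → 0 < A i j) :
    ∀ d (i j : Fin n), (i : ℕ) = j + d → 0 < (A ^ d) i j := by
  intro d
  induction d with
  | zero =>
    intro i j hij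
    rw [Fin.ext (hij.trans (add_zero _)), pow_zero, one_apply_eq]
    exact one_pos
  | succ d ih =>
    intro i j hij
    have hl : (j : ℕ) + d < n := by omega
    exact pow_succ_apply_pos hA (l := ⟨j + d, hl⟩) (hsub _ _ (by simp; omega)) (ih _ _ rfl)

lemma exists_pow_apply_pos_of_apply_pos_of_le_succ (hn : 2 ≤ n) (hA : ∀ i j, 0 ≤ A i j)
    (hpos : ∀ i j : Fin n, (i : ℕ) ≤ j + 1 → 0 < A i j) (i j : Fin n) :
    ∃ k, 1 ≤ k ∧ k ≤ n - 1 ∧ 0 < (A ^ k) i j := by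
  by_cases hij : (i : ℕ) ≤ j + 1
  · exact ⟨1, le_rfl, by omega, by simpa using hpos i j hij⟩
  · refine ⟨i - j, by omega, by omega, ?_⟩
    exact pow_apply_pos_of_subdiagonal_pos hA (fun i j h => hpos i j h.le) _ i j (by omega)

end Matrix

noncomputable def transitionEntry (μ : ℝ) (B : ℕ) (τ : ℕ → ℝ) (j i : ℕ) : ℝ :=
  if i = B - 1 then erlangCDF μ ((B : ℤ) - (j : ℤ)) (τ (B - 1))
  else if i = 0 then 1 - erlangCDF μ (2 - (j : ℤ)) (τ 1)
  else erlangCDF μ (1 + (i : ℤ) - (j : ℤ)) (τ i)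
    - erlangCDF μ (2 + (i : ℤ) - (j : ℤ)) (τ (i + 1))

section transitionEntry

variable {μ : ℝ} {B : ℕ} {τ : ℕ → ℝ} {j i : ℕ}

lemma transitionEntry_nonneg (hμ : 0 ≤ μ) (hτ : AntitoneOn τ (Set.Icc 1 (B - 1)))
    (hi : i < B) :
    0 ≤ transitionEntry μ B τ j i := by
  unfold transitionEntry
  split_ifs with hiLast hiFirst
  · exact erlangCDF_nonneg hμ _ _
  · exact sub_nonneg.2 (erlangCDF_le_one hμ _ _)
  · rw [show (2 + i - j : ℤ) = 1 + i - j + 1 by ring]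
    exact erlangCDF_sub_erlangCDF_succ_nonneg hμ _
      (hτ ⟨by omega, by omega⟩ ⟨by omega, by omega⟩ (Nat.le_succ i))

lemma transitionEntry_pos (hμ : 0 < μ) (hτ : AntitoneOn τ (Set.Icc 1 (B - 1)))
    (hlast : 0 < τ (B - 1)) (hi : i < B) (hji : j ≤ i + 1) :
    0 < transitionEntry μ B τ j i := by
  have hτpos : ∀ m, 1 ≤ m → m ≤ B - 1 → 0 < τ m := fun m h1 h2 =>
    hlast.trans_le (hτ ⟨h1, h2⟩ ⟨by omega, le_rfl⟩ h2)
  unfold transitionEntry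
  split_ifs with hiLast hiFirst
  · exact erlangCDF_pos hμ hlast
  · exact sub_pos.2 (erlangCDF_lt_one hμ.le (by omega) (hτpos 1 le_rfl (by omega)).le)
  · rw [show (2 + i - j : ℤ) = 1 + i - j + 1 by ring]
    exact erlangCDF_sub_erlangCDF_succ_pos hμ (by omega) (hτpos _ (by omega) (by omega))
      (hτ ⟨by omega, by omega⟩ ⟨by omega, by omega⟩ (Nat.le_succ i))

end transitionEntry

/-- For `μ > 0`, integer `B ≥ 2` and thresholds
`0 < τ (B-1) ≤ τ (B-2) ≤ … ≤ τ 1 < ∞`, the `B × B` transition matrix `P` given by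
`P j (B-1) = G_{B-j}(τ (B-1))` and `P j i = G_{1+i-j}(τ i) - G_{2+i-j}(τ (i+1))` for
`0 ≤ i < B-1` (where, for `i = 0`, the convention `τ 0 = +∞` makes the first term equal `1`)
is irreducible: for all states `j, i` there is a `k` with `1 ≤ k ≤ B-1` such that the
`(j,i)` entry of `P^k` is strictly positive. -/
theorem transition_matrix_irreducible (μ : ℝ) (hμ : 0 < μ) (B : ℕ) (hB : 2 ≤ B)
    (τ : ℕ → ℝ) (hpos : 0 < τ (B - 1))
    (hmono : ∀ m, 1 ≤ m → m + 1 ≤ B - 1 → τ (m + 1) ≤ τ m)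
    (P : Matrix (Fin B) (Fin B) ℝ)
    (hP : ∀ j i : Fin B, P j i =
      if (i : ℕ) = B - 1 then erlangCDF μ ((B : ℤ) - ((j : ℕ) : ℤ)) (τ (B - 1))
      else if (i : ℕ) = 0 then 1 - erlangCDF μ (2 - ((j : ℕ) : ℤ)) (τ 1)
      else erlangCDF μ (1 + ((i : ℕ) : ℤ) - ((j : ℕ) : ℤ)) (τ (i : ℕ))
        - erlangCDF μ (2 + ((i : ℕ) : ℤ) - ((j : ℕ) : ℤ)) (τ ((i : ℕ) + 1))) :
    ∀ j i : Fin B, ∃ k : ℕ, 1 ≤ k ∧ k ≤ B - 1 ∧ 0 < (P ^ k) j i := by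
  have hP' : ∀ j i : Fin B, P j i = transitionEntry μ B τ j i := hP
  have hτ : AntitoneOn τ (Set.Icc 1 (B - 1)) :=
    antitoneOn_of_succ_le Set.ordConnected_Icc fun m _ hm hm' =>
      hmono m hm.1 (by simpa using hm'.2)
  refine Matrix.exists_pow_apply_pos_of_apply_pos_of_le_succ hB (fun j i => ?_) (fun j i hji => ?_)
  · rw [hP']; exact transitionEntry_nonneg hμ.le hτ i.isLt
  · rw [hP']; exact transitionEntry_pos hμ hτ hpos i.isLt hji
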